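/- arXiv:math/0405100 — 6 statements merged into one kernel-verified Lean document; each statement's English description precedes it below -/
import Mathlib

section
/- F is the free algebra of the variety V on the generators x₁, x₂, …: for every algebra M = (M, *_M, p_M, 0_M) with a binary operation *_M and constants p_M, 0_M satisfying the four laws 0 * x = x * 0 = 0, (x * y) * z = (x * z) * y, x * (y * z) = 0, (x * y) * y = 0, and for every function g : {x₁, x₂, …} → M, there exists a unique map φ : F → M with φ(a * b) = φ(a) *_M φ(b) for all a, b ∈ F, φ(0) = 0_M, φ(p) = p_M, and φ(xᵢ) = g(xᵢ) for all i. -/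
/-- Letters: `none` is the distinguished letter `p`, `some i` is the generator letter `xᵢ`. -/
abbrev Letter := Option ℕ

/-- The carrier of the free algebra: `0`, the letters, and the words
(pairs of a letter and a finite nonempty set of letters). -/
inductive F : Type
  | zero : F
  | letter : Letter → F
  | word : Letter → {Y : Finset Letter // Y.Nonempty} → F

namespace F

/-- The binary operation `*` on `F`. -/
def mul : F → F → F
  | zero, _ => zero
  | _, zero => zero
  | _, word _ _ => zero
  | letter x, letter y => word x ⟨{y}, Finset.singleton_nonempty y⟩
  | word x Y, letter y =>
      if y ∈ Y.1 then zero
      else word x ⟨insert y Y.1, Finset.insert_nonempty y Y.1⟩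

/-- The distinguished letter `p` as an element of `F`. -/
def p : F := letter none

/-- The generator letter `xᵢ` as an element of `F`. -/
def x (i : ℕ) : F := letter (some i)

end F

/-!
A word `(x, {y₁, …, yₖ})` is the product `x * y₁ * ⋯ * yₖ` of letters, so a homomorphism out of `F`
is determined by its values on the letters and on `0`. Conversely, in an algebra of `V` the value
`x * y₁ * ⋯ * yₖ` does not depend on the order of the `yᵢ` by `(a * b) * c = (a * c) * b`; sending
each word to it gives a homomorphism: products into a word vanish by `a * (b * c) = 0`, and a
repeated letter gives `0` by `(a * b) * b = 0`, matching the multiplication table of `F`.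
-/

namespace F

section Hom

variable {M : Type*} (m : M → M → M)

theorem mul_letter_letter (x y : Letter) :
    mul (letter x) (letter y) = word x ⟨{y}, Finset.singleton_nonempty y⟩ := rfl

theorem mul_word_letter_of_mem {x y : Letter} {Y : {Y : Finset Letter // Y.Nonempty}}
    (hy : y ∈ Y.1) : mul (word x Y) (letter y) = zero := if_pos hy

theorem mul_word_letter_of_notMem {x y : Letter} {Y : {Y : Finset Letter // Y.Nonempty}}
    (hy : y ∉ Y.1) :
    mul (word x Y) (letter y) = word x ⟨Y.1.cons y hy, Finset.cons_nonempty hy⟩ := by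
  simp only [mul, if_neg hy, Finset.cons_eq_insert]

theorem hom_ext {ψ₁ ψ₂ : F → M}
    (h₁ : ∀ a b, ψ₁ (mul a b) = m (ψ₁ a) (ψ₁ b)) (h₂ : ∀ a b, ψ₂ (mul a b) = m (ψ₂ a) (ψ₂ b))
    (hzero : ψ₁ zero = ψ₂ zero) (hletter : ∀ l, ψ₁ (letter l) = ψ₂ (letter l)) : ψ₁ = ψ₂ := by
  funext a
  rcases a with _ | l | ⟨x, Y, hY⟩
  · exact hzero
  · exact hletter l
  · induction hY using Finset.Nonempty.cons_induction with
    | singleton y => rw [← mul_letter_letter, h₁, h₂, hletter, hletter]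
    | cons y s hy hs ih =>
      rw [← mul_word_letter_of_notMem (Y := ⟨s, hs⟩) hy, h₁, h₂, ih, hletter]

end Hom

section Eval

variable {M : Type*} (m : M → M → M) (zM : M) (L : Letter → M)
  (law2 : ∀ a b c : M, m (m a b) c = m (m a c) b)

include law2 in
theorem leftCommutative_mul_letter : LeftCommutative fun (y : Letter) (a : M) => m a (L y) :=
  ⟨fun y z a => law2 a (L z) (L y)⟩

def eval : F → M
  | zero => zM
  | letter l => L l
  | word x Y =>
    haveI := leftCommutative_mul_letter m L law2
    Multiset.foldr (fun y a => m a (L y)) (L x) Y.1.val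

theorem eval_word_singleton (x y : Letter) :
    eval m zM L law2 (word x ⟨{y}, Finset.singleton_nonempty y⟩) = m (L x) (L y) := by
  simp only [eval, Finset.singleton_val, Multiset.foldr_singleton]

theorem eval_word_cons {x y : Letter} {Y : {Y : Finset Letter // Y.Nonempty}} (hy : y ∉ Y.1) :
    eval m zM L law2 (word x ⟨Y.1.cons y hy, Finset.cons_nonempty hy⟩) =
      m (eval m zM L law2 (word x Y)) (L y) := by
  simp only [eval, Finset.cons_val, Multiset.foldr_cons]

theorem exists_eval_word_eq_mul_of_mem {x y : Letter} {Y : {Y : Finset Letter // Y.Nonempty}}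
    (hy : y ∈ Y.1) : ∃ u, eval m zM L law2 (word x Y) = m u (L y) := by
  obtain ⟨s, hs⟩ := Multiset.exists_cons_of_mem (Finset.mem_def.mp hy)
  have := leftCommutative_mul_letter m L law2
  exact ⟨Multiset.foldr (fun y a => m a (L y)) (L x) s,
    by simp only [eval, hs, Multiset.foldr_cons]⟩

theorem mul_eval_word (law3 : ∀ a b c : M, m a (m b c) = zM) (a : M) (x : Letter)
    (Y : {Y : Finset Letter // Y.Nonempty}) : m a (eval m zM L law2 (word x Y)) = zM := by
  obtain ⟨y, hy⟩ := Y.2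
  obtain ⟨u, hu⟩ := exists_eval_word_eq_mul_of_mem m zM L law2 (x := x) hy
  rw [hu, law3]

theorem eval_mul (law1 : ∀ a : M, m zM a = zM) (law1' : ∀ a : M, m a zM = zM)
    (law3 : ∀ a b c : M, m a (m b c) = zM) (law4 : ∀ a b : M, m (m a b) b = zM) (a b : F) :
    eval m zM L law2 (mul a b) = m (eval m zM L law2 a) (eval m zM L law2 b) := by
  rcases a with _ | x | ⟨x, Y⟩
  · exact (law1 _).symm
  · rcases b with _ | y | ⟨y, Z⟩
    · exact (law1' _).symm
    · exact eval_word_singleton m zM L law2 x y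
    · exact (mul_eval_word m zM L law2 law3 _ y Z).symm
  · rcases b with _ | y | ⟨y, Z⟩
    · exact (law1' _).symm
    · by_cases hy : y ∈ Y.1
      · obtain ⟨u, hu⟩ := exists_eval_word_eq_mul_of_mem m zM L law2 (x := x) hy
        rw [mul_word_letter_of_mem hy, hu]
        exact (law4 u (L y)).symm
      · rw [mul_word_letter_of_notMem hy]
        exact eval_word_cons m zM L law2 hy
    · exact (mul_eval_word m zM L law2 law3 _ y Z).symm

end Eval

end F

/-- `F` is the free algebra on the generators `x₁, x₂, …` in the variety `V`. -/
theorem stmt_2 {M : Type*} (m : M → M → M) (pM zM : M)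
    (law1 : ∀ a : M, m zM a = zM) (law1' : ∀ a : M, m a zM = zM)
    (law2 : ∀ a b c : M, m (m a b) c = m (m a c) b)
    (law3 : ∀ a b c : M, m a (m b c) = zM)
    (law4 : ∀ a b : M, m (m a b) b = zM)
    (g : ℕ → M) :
    ∃! φ : F → M,
      (∀ a b : F, φ (F.mul a b) = m (φ a) (φ b)) ∧
      φ F.zero = zM ∧ φ F.p = pM ∧ (∀ i : ℕ, φ (F.x i) = g i) := by
  let L : Letter → M := fun l => l.elim pM g
  have hom := F.eval_mul m zM L law2 law1 law1' law3 law4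
  refine ⟨F.eval m zM L law2, ⟨hom, rfl, rfl, fun i => rfl⟩, ?_⟩
  rintro ψ ⟨hψ, hψzero, hψp, hψx⟩
  refine F.hom_ext m hψ hom hψzero ?_
  rintro (_ | i)
  · exact hψp
  · exact hψx i
end

section
/- For every natural number n, the subalgebra of F generated by {x₁, …, xₙ} (the smallest subset of F containing 0, p, x₁, …, xₙ and closed under *) has exactly 1 + (n+1)·2^(n+1) elements. -/
/-- Membership in the subalgebra of `F` generated by `G`: the smallest subset of `F`
containing `0`, `p` and `G` that is closed under `*`. -/
inductive Gen (G : Set F) : F → Prop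
  | zero : Gen G F.zero
  | p : Gen G F.p
  | base {a : F} : a ∈ G → Gen G a
  | mul {a b : F} : Gen G a → Gen G b → Gen G (F.mul a b)

/-!
Identify a letter `ℓ` with the pair `(ℓ, ∅)`. Then every nonzero element of `F` is a pair
`(ℓ, Y)`, and right multiplication by a letter `y ∉ Y` inserts `y` into `Y`, while any other
product is `0`. Hence the subalgebra generated by `x_i`, `i ∈ S`, is `0` together with all pairs
`(ℓ, Y)` with `ℓ ∈ A` and `Y ⊆ A`, where `A = {p} ∪ {x_i | i ∈ S}`: each such pair is
`(⋯((ℓ * y₁) * y₂) ⋯) * y_k`. Counting gives `1 + |A| · 2^|A|`.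
-/

namespace F

def mkWord (ℓ : Letter) (Y : Finset Letter) : F :=
  if h : Y.Nonempty then word ℓ ⟨Y, h⟩ else letter ℓ

@[simp]
lemma mkWord_empty (ℓ : Letter) : mkWord ℓ ∅ = letter ℓ := by
  simp [mkWord]

lemma mkWord_ne_zero (ℓ : Letter) (Y : Finset Letter) : mkWord ℓ Y ≠ zero := by
  unfold mkWord
  split <;> simp

lemma mkWord_injective : Function.Injective (Function.uncurry mkWord) := by
  rintro ⟨ℓ, Y⟩ ⟨m, Z⟩ h
  rcases Y.eq_empty_or_nonempty with rfl | hY <;> rcases Z.eq_empty_or_nonempty with rfl | hZ <;>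
    simp_all [mkWord]

lemma mul_zero (a : F) : mul a zero = zero := by
  cases a <;> rfl

lemma mul_mkWord_letter (ℓ y : Letter) (Y : Finset Letter) :
    mul (mkWord ℓ Y) (letter y) = if y ∈ Y then zero else mkWord ℓ (insert y Y) := by
  rcases Y.eq_empty_or_nonempty with rfl | hY
  · simp [mul, mkWord]
  · simp [mul, mkWord, hY]

lemma mul_mkWord_mkWord (ℓ m : Letter) (Y Z : Finset Letter) :
    mul (mkWord ℓ Y) (mkWord m Z) =
      if Z = ∅ ∧ m ∉ Y then mkWord ℓ (insert m Y) else zero := by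
  rcases Z.eq_empty_or_nonempty with rfl | hZ
  · simp [mul_mkWord_letter, ite_not]
  · simp only [mkWord, hZ, dite_true, hZ.ne_empty, false_and, if_false]
    split <;> rfl

end F

def genClosure (S : Finset ℕ) : Set F :=
  insert F.zero (Function.uncurry F.mkWord '' ↑(S.insertNone ×ˢ S.insertNone.powerset))

lemma mkWord_mem_genClosure {S : Finset ℕ} {ℓ : Letter} {Y : Finset Letter}
    (hℓ : ℓ ∈ S.insertNone) (hY : Y ⊆ S.insertNone) : F.mkWord ℓ Y ∈ genClosure S :=
  Set.mem_insert_of_mem _ ⟨(ℓ, Y), Finset.mem_product.mpr ⟨hℓ, Finset.mem_powerset.mpr hY⟩, rfl⟩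

lemma letter_mem_genClosure {S : Finset ℕ} {ℓ : Letter} (hℓ : ℓ ∈ S.insertNone) :
    F.letter ℓ ∈ genClosure S := by
  simpa using mkWord_mem_genClosure hℓ (Finset.empty_subset _)

lemma mem_genClosure {S : Finset ℕ} {a : F} :
    a ∈ genClosure S ↔
      a = F.zero ∨ ∃ ℓ ∈ S.insertNone, ∃ Y ⊆ S.insertNone, a = F.mkWord ℓ Y := by
  simp [genClosure, eq_comm]

lemma mul_mem_genClosure {S : Finset ℕ} {a b : F} (ha : a ∈ genClosure S)
    (hb : b ∈ genClosure S) : F.mul a b ∈ genClosure S := by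
  rcases mem_genClosure.mp ha with rfl | ⟨ℓ, hℓ, Y, hY, rfl⟩
  · exact Set.mem_insert _ _
  rcases mem_genClosure.mp hb with rfl | ⟨m, hm, Z, -, rfl⟩
  · rw [F.mul_zero]; exact Set.mem_insert _ _
  rw [F.mul_mkWord_mkWord]
  split
  · exact mkWord_mem_genClosure hℓ (Finset.insert_subset hm hY)
  · exact Set.mem_insert _ _

lemma gen_letter {S : Finset ℕ} {ℓ : Letter} (hℓ : ℓ ∈ S.insertNone) :
    Gen (F.x '' ↑S) (F.letter ℓ) := by
  cases ℓ with
  | none => exact Gen.p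
  | some i => exact Gen.base ⟨i, Finset.some_mem_insertNone.mp hℓ, rfl⟩

lemma gen_mkWord {S : Finset ℕ} {ℓ : Letter} (hℓ : ℓ ∈ S.insertNone) {Y : Finset Letter}
    (hY : Y ⊆ S.insertNone) : Gen (F.x '' ↑S) (F.mkWord ℓ Y) := by
  induction Y using Finset.induction_on with
  | empty => simpa using gen_letter hℓ
  | @insert y Y hyY ih =>
    have hmul : F.mkWord ℓ (insert y Y) = F.mul (F.mkWord ℓ Y) (F.letter y) := by
      rw [F.mul_mkWord_letter, if_neg hyY]
    rw [Finset.insert_subset_iff] at hY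
    rw [hmul]
    exact Gen.mul (ih hY.2) (gen_letter hY.1)

theorem setOf_gen_eq_genClosure (S : Finset ℕ) : {a | Gen (F.x '' ↑S) a} = genClosure S := by
  ext a
  constructor
  · intro h
    induction h with
    | zero => exact Set.mem_insert _ _
    | p => exact letter_mem_genClosure Finset.none_mem_insertNone
    | base hb =>
      obtain ⟨i, hi, rfl⟩ := hb
      exact letter_mem_genClosure (Finset.some_mem_insertNone.mpr hi)
    | mul _ _ iha ihb => exact mul_mem_genClosure iha ihb
  · intro h
    rcases mem_genClosure.mp h with rfl | ⟨ℓ, hℓ, Y, hY, rfl⟩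
    · exact Gen.zero
    · exact gen_mkWord hℓ hY

theorem ncard_genClosure (S : Finset ℕ) :
    (genClosure S).ncard = 1 + (S.card + 1) * 2 ^ (S.card + 1) := by
  rw [genClosure, Set.ncard_insert_of_notMem, Set.ncard_image_of_injective _ F.mkWord_injective,
    Set.ncard_coe_finset, Finset.card_product, Finset.card_powerset, Finset.card_insertNone,
    add_comm]
  rintro ⟨⟨ℓ, Y⟩, -, h⟩
  exact F.mkWord_ne_zero ℓ Y h

/-- The subalgebra of `F` generated by `{x₁, …, xₙ}` has exactly
`1 + (n+1)·2^(n+1)` elements. -/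
theorem stmt_3 (n : ℕ) :
    {a : F | Gen {f : F | ∃ i < n, f = F.x i} a}.ncard = 1 + (n + 1) * 2 ^ (n + 1) := by
  have hgen : {f : F | ∃ i < n, f = F.x i} = F.x '' ↑(Finset.range n) := by
    ext f
    simp [eq_comm]
  rw [hgen, setOf_gen_eq_genClosure, ncard_genClosure, Finset.card_range]
end

section
/- The variety V is locally finite: for every algebra M = (M, *_M, p_M, 0_M) with a binary operation *_M and constants p_M, 0_M satisfying the four laws 0 * x = x * 0 = 0, (x * y) * z = (x * z) * y, x * (y * z) = 0, (x * y) * y = 0, and every n-element subset G ⊆ M, the subalgebra of M generated by G (the smallest subset containing 0_M, p_M, and G and closed under *_M) is finite, with at most 1 + (n+1)·2^(n+1) elements. -/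
/-!
Right commutativity `(x * y) * z = (x * z) * y` lets us write every left-nested product
`(…((x * y₁) * y₂) …) * yₖ` as `x` acted on by the finite set `{y₁, …, yₖ}`: the order of
the `yᵢ` is irrelevant, and a repeated factor kills the product by `(x * y) * y = 0`.
A product whose right factor is itself a product vanishes by `x * (y * z) = 0`. So the
subalgebra generated by `G` consists of `0` and the products `x * s` with `x ∈ A := G ∪ {p}`,
`s ⊆ A`, of which there are at most `|A| · 2^|A|`.
-/

/-- Membership in the subalgebra of `(M, m, pM, zM)` generated by `G`: the smallest
subset of `M` containing `zM`, `pM` and `G` that is closed under `m`. -/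
inductive GenM {M : Type*} (m : M → M → M) (pM zM : M) (G : Set M) : M → Prop
  | zero : GenM m pM zM G zM
  | p : GenM m pM zM G pM
  | base {a : M} : a ∈ G → GenM m pM zM G a
  | mul {a b : M} : GenM m pM zM G a → GenM m pM zM G b → GenM m pM zM G (m a b)

section RightProd

variable {M : Type*} (m : M → M → M) [RightCommutative m]

/-- `rightProd m x {y₁, …, yₖ} = m (… (m (m x y₁) y₂) …) yₖ`. -/
def rightProd (x : M) (s : Finset M) : M :=
  s.val.foldl m x

@[simp]
lemma rightProd_empty (x : M) : rightProd m x ∅ = x :=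
  Multiset.foldl_zero m x

variable [DecidableEq M]

lemma rightProd_insert {x y : M} {s : Finset M} (hy : y ∉ s) :
    rightProd m x (insert y s) = m (rightProd m x s) y := by
  rw [rightProd, Finset.insert_val_of_notMem hy, ← Multiset.singleton_add, add_comm,
    Multiset.foldl_add]
  rfl

lemma exists_rightProd_eq_mul {s : Finset M} (hs : s.Nonempty) (x : M) :
    ∃ a b, rightProd m x s = m a b := by
  obtain ⟨y, hy⟩ := hs
  exact ⟨rightProd m x (s.erase y), y, by
    rw [← rightProd_insert m (s.notMem_erase y), Finset.insert_erase hy]⟩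

lemma mul_rightProd_of_mem {z : M} (law4 : ∀ a b : M, m (m a b) b = z) (x : M) {y : M}
    {s : Finset M} (hy : y ∈ s) : m (rightProd m x s) y = z := by
  rw [← Finset.insert_erase hy, rightProd_insert m (s.notMem_erase y), law4]

def rightProds (z : M) (A : Finset M) : Finset M :=
  insert z ((A ×ˢ A.powerset).image fun q => rightProd m q.1 q.2)

variable {m} {z : M} {A : Finset M}

lemma card_rightProds_le : (rightProds m z A).card ≤ 1 + A.card * 2 ^ A.card := by
  calc (rightProds m z A).card
      ≤ ((A ×ˢ A.powerset).image fun q => rightProd m q.1 q.2).card + 1 :=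
        Finset.card_insert_le _ _
    _ ≤ (A ×ˢ A.powerset).card + 1 := by gcongr; exact Finset.card_image_le
    _ = 1 + A.card * 2 ^ A.card := by
        rw [Finset.card_product, Finset.card_powerset, add_comm]

lemma mem_rightProds_self : z ∈ rightProds m z A :=
  Finset.mem_insert_self _ _

lemma rightProd_mem_rightProds {x : M} {s : Finset M} (hx : x ∈ A) (hs : s ⊆ A) :
    rightProd m x s ∈ rightProds m z A :=
  Finset.mem_insert_of_mem <| Finset.mem_image.mpr
    ⟨(x, s), Finset.mem_product.mpr ⟨hx, Finset.mem_powerset.mpr hs⟩, rfl⟩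

lemma mem_rightProds_of_mem {x : M} (hx : x ∈ A) : x ∈ rightProds m z A := by
  simpa using rightProd_mem_rightProds (m := m) (z := z) hx (Finset.empty_subset A)

lemma mul_mem_rightProds (law1 : ∀ a : M, m z a = z) (law1' : ∀ a : M, m a z = z)
    (law3 : ∀ a b c : M, m a (m b c) = z) (law4 : ∀ a b : M, m (m a b) b = z) {a b : M}
    (ha : a ∈ rightProds m z A) (hb : b ∈ rightProds m z A) : m a b ∈ rightProds m z A := by
  rcases Finset.mem_insert.mp ha with rfl | ha
  · rw [law1]; exact mem_rightProds_self
  rcases Finset.mem_insert.mp hb with rfl | hb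
  · rw [law1']; exact mem_rightProds_self
  obtain ⟨⟨x, s⟩, hxs, rfl⟩ := Finset.mem_image.mp ha
  obtain ⟨⟨y, t⟩, hyt, rfl⟩ := Finset.mem_image.mp hb
  simp only [Finset.mem_product, Finset.mem_powerset] at hxs hyt
  obtain rfl | ht := t.eq_empty_or_nonempty
  · rw [rightProd_empty]
    by_cases hys : y ∈ s
    · rw [mul_rightProd_of_mem m law4 x hys]; exact mem_rightProds_self
    · rw [← rightProd_insert m hys]
      exact rightProd_mem_rightProds hxs.1 (Finset.insert_subset hyt.1 hxs.2)
  · obtain ⟨c, d, hcd⟩ := exists_rightProd_eq_mul m ht y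
    rw [hcd, law3]
    exact mem_rightProds_self

lemma mem_rightProds_of_genM (law1 : ∀ a : M, m z a = z) (law1' : ∀ a : M, m a z = z)
    (law3 : ∀ a b c : M, m a (m b c) = z) (law4 : ∀ a b : M, m (m a b) b = z)
    {p : M} {G : Set M} (hp : p ∈ A) (hG : G ⊆ A) {a : M} (ha : GenM m p z G a) :
    a ∈ rightProds m z A := by
  induction ha with
  | zero => exact mem_rightProds_self
  | p => exact mem_rightProds_of_mem hp
  | base hg => exact mem_rightProds_of_mem (hG hg)
  | mul _ _ iha ihb => exact mul_mem_rightProds law1 law1' law3 law4 iha ihb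

end RightProd

/-- The variety `V` is locally finite: in any algebra satisfying the four laws, the
subalgebra generated by an `n`-element set is finite with at most
`1 + (n+1)·2^(n+1)` elements. -/
theorem stmt_4 {M : Type*} (m : M → M → M) (pM zM : M)
    (law1 : ∀ a : M, m zM a = zM) (law1' : ∀ a : M, m a zM = zM)
    (law2 : ∀ a b c : M, m (m a b) c = m (m a c) b)
    (law3 : ∀ a b c : M, m a (m b c) = zM)
    (law4 : ∀ a b : M, m (m a b) b = zM)
    (G : Set M) (n : ℕ) (hGfin : G.Finite) (hGcard : G.ncard = n) :
    {a : M | GenM m pM zM G a}.Finite ∧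
    {a : M | GenM m pM zM G a}.ncard ≤ 1 + (n + 1) * 2 ^ (n + 1) := by
  classical
  have : RightCommutative m := ⟨law2⟩
  set A := insert pM hGfin.toFinset
  have hsub : {a : M | GenM m pM zM G a} ⊆ rightProds m zM A := fun a ha =>
    mem_rightProds_of_genM law1 law1' law3 law4 (Finset.mem_insert_self _ _)
      (fun g hg => Finset.mem_insert_of_mem (hGfin.mem_toFinset.mpr hg)) ha
  have hA : A.card ≤ n + 1 := by
    rw [← hGcard, Set.ncard_eq_toFinset_card G hGfin]
    exact Finset.card_insert_le _ _
  refine ⟨(rightProds m zM A).finite_toSet.subset hsub, ?_⟩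
  calc {a : M | GenM m pM zM G a}.ncard
      ≤ (rightProds m zM A).card := (Set.ncard_le_ncard hsub).trans_eq (Set.ncard_coe_finset _)
    _ ≤ 1 + A.card * 2 ^ A.card := card_rightProds_le
    _ ≤ 1 + (n + 1) * 2 ^ (n + 1) := by gcongr; norm_num
end

section
/- Let φ : F → F be any endomorphism of F, i.e., a map with φ(a * b) = φ(a) * φ(b) for all a, b ∈ F, φ(0) = 0, and φ(p) = p. Then for every word w = (p, Y) ∈ F whose first component is the letter p, either φ(w) = 0 or φ(w) is a word (p, Y') whose first component is p and with |Y'| = |Y| (i.e., φ(w) has the same length as w). -/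
/-!
A word `(p, {y₁, …, yₖ})` is the product `p * y₁ * ⋯ * yₖ` of letters, so its image is
`p * φ(y₁) * ⋯ * φ(yₖ)`. The product `p * b` is `0` or a word `(p, {z})`, and multiplying `0`
or a word `(p, Y')` on the right by anything gives `0` or `(p, Y' ∪ {z})` with `z ∉ Y'`; so each
factor adds exactly one letter unless the product collapses to `0`.
-/

namespace F

/-- `n` is `|Y|`, one less than the length of the word. -/
def IsZeroOrWord (x : Letter) (n : ℕ) (a : F) : Prop :=
  a = zero ∨ ∃ Y : {Y : Finset Letter // Y.Nonempty}, a = word x Y ∧ Y.1.card = n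

theorem word_singleton_eq_mul (x y : Letter) :
    word x ⟨{y}, Finset.singleton_nonempty y⟩ = mul (letter x) (letter y) :=
  rfl

theorem word_cons_eq_mul (x y : Letter) {S : Finset Letter} (hy : y ∉ S) (hS : S.Nonempty) :
    word x ⟨S.cons y hy, Finset.cons_nonempty hy⟩ = mul (word x ⟨S, hS⟩) (letter y) := by
  simp [mul, hy]

theorem isZeroOrWord_letter_mul (x : Letter) (b : F) : IsZeroOrWord x 1 (mul (letter x) b) := by
  cases b with
  | zero => exact Or.inl rfl
  | letter y => exact Or.inr ⟨_, rfl, Finset.card_singleton y⟩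
  | word _ _ => exact Or.inl rfl

theorem IsZeroOrWord.mul {x : Letter} {n : ℕ} {a : F} (ha : IsZeroOrWord x n a) (b : F) :
    IsZeroOrWord x (n + 1) (F.mul a b) := by
  obtain rfl | ⟨⟨Y, hY⟩, rfl, rfl⟩ := ha
  · exact Or.inl rfl
  cases b with
  | zero => exact Or.inl rfl
  | word _ _ => exact Or.inl rfl
  | letter y =>
    by_cases hy : y ∈ Y
    · exact Or.inl (if_pos hy)
    · exact Or.inr ⟨_, if_neg hy, Finset.card_insert_of_notMem hy⟩

end F

theorem stmt_6_general (φ : F → F)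
    (hmul : ∀ a b : F, φ (F.mul a b) = F.mul (φ a) (φ b))
    (hp : φ F.p = F.p)
    (Y : {Y : Finset Letter // Y.Nonempty}) :
    φ (F.word none Y) = F.zero ∨
      ∃ Y' : {Y : Finset Letter // Y.Nonempty},
        φ (F.word none Y) = F.word none Y' ∧ Y'.1.card = Y.1.card := by
  change F.IsZeroOrWord none Y.1.card (φ (F.word none Y))
  obtain ⟨S, hS⟩ := Y
  induction hS using Finset.Nonempty.cons_induction with
  | singleton y =>
    rw [F.word_singleton_eq_mul, hmul, ← F.p, hp]
    exact F.isZeroOrWord_letter_mul none _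
  | cons y S hy hS ih =>
    rw [F.word_cons_eq_mul none y hy hS, hmul, Finset.card_cons]
    exact ih.mul _

/-- Any endomorphism of `F` sends a word starting with `p` either to `0` or to a
word starting with `p` of the same length. -/
theorem stmt_6 (φ : F → F)
    (hmul : ∀ a b : F, φ (F.mul a b) = F.mul (φ a) (φ b))
    (hzero : φ F.zero = F.zero) (hp : φ F.p = F.p)
    (Y : {Y : Finset Letter // Y.Nonempty}) :
    φ (F.word none Y) = F.zero ∨
      ∃ Y' : {Y : Finset Letter // Y.Nonempty},
        φ (F.word none Y) = F.word none Y' ∧ Y'.1.card = Y.1.card :=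
  stmt_6_general φ hmul hp Y
end

section
/- For every set A of natural numbers, the set T(A) = {x₁, x₂, …} ∪ S(A) is a term clone of the variety V, viewed as a subset of the free algebra F: it contains all generators xᵢ, and it is closed under substitution, i.e., for every endomorphism φ : F → F (a map with φ(a * b) = φ(a) * φ(b), φ(0) = 0, φ(p) = p) such that φ(xᵢ) ∈ T(A) for all i, one has φ(t) ∈ T(A) for every t ∈ T(A). -/
/-- For a set `A` of natural numbers, `S A` consists of `0` together with all words whose
first component is the letter `p` and whose length (`|Y| + 1`) lies in `A`. -/
def S (A : Set ℕ) : Set F :=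
  {f | f = F.zero ∨ ∃ Y : {Y : Finset Letter // Y.Nonempty},
    f = F.word none Y ∧ Y.1.card + 1 ∈ A}

/-! A word `(p, Y)` is the product `p * y₁ * ⋯ * yₙ` of letters, so an endomorphism fixing `p`
sends it to a product of the same shape with `|Y|` right factors: either `0` or again a word
`(p, Z)` with `|Z| = |Y|`. Hence `S A` is stable. -/

namespace F

def IsZeroOrWordOfCard (x : Letter) (n : ℕ) (u : F) : Prop :=
  u = zero ∨ ∃ Z : {Z : Finset Letter // Z.Nonempty}, u = word x Z ∧ Z.1.card = n

lemma word_singleton (x a : Letter) :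
    word x ⟨{a}, Finset.singleton_nonempty a⟩ = mul (letter x) (letter a) :=
  rfl

lemma word_cons (x a : Letter) (Y : Finset Letter) (ha : a ∉ Y) (hY : Y.Nonempty) :
    word x ⟨Finset.cons a Y ha, Finset.cons_nonempty ha⟩ = mul (word x ⟨Y, hY⟩) (letter a) := by
  simp only [mul, ha, if_false, Finset.cons_eq_insert]

lemma isZeroOrWordOfCard_letter_mul (x : Letter) (v : F) :
    IsZeroOrWordOfCard x 1 (mul (letter x) v) := by
  cases v with
  | zero => exact Or.inl rfl
  | letter b => exact Or.inr ⟨⟨{b}, Finset.singleton_nonempty b⟩, rfl, Finset.card_singleton b⟩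
  | word _ _ => exact Or.inl rfl

lemma IsZeroOrWordOfCard.mul {x : Letter} {n : ℕ} {u : F} (hu : IsZeroOrWordOfCard x n u)
    (v : F) : IsZeroOrWordOfCard x (n + 1) (u.mul v) := by
  rcases hu with rfl | ⟨⟨Z, hZ⟩, rfl, rfl⟩
  · exact Or.inl rfl
  cases v with
  | zero => exact Or.inl rfl
  | word _ _ => exact Or.inl rfl
  | letter b =>
    by_cases hb : b ∈ Z
    · left; simp only [F.mul, hb, if_true]
    · right
      exact ⟨⟨insert b Z, Finset.insert_nonempty b Z⟩, by simp only [F.mul, hb, if_false],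
        Finset.card_insert_of_notMem hb⟩

lemma isZeroOrWordOfCard_map_word {φ : F → F} (hφ : ∀ a b, φ (mul a b) = mul (φ a) (φ b))
    {x x' : Letter} (hx : φ (letter x) = letter x') (Y : {Y : Finset Letter // Y.Nonempty}) :
    IsZeroOrWordOfCard x' Y.1.card (φ (word x Y)) := by
  obtain ⟨Y, hY⟩ := Y
  induction hY using Finset.Nonempty.cons_induction with
  | singleton a =>
    rw [word_singleton, hφ, hx]
    exact isZeroOrWordOfCard_letter_mul x' _
  | cons a Y ha hY ih =>
    rw [word_cons x a Y ha hY, hφ, Finset.card_cons]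
    exact ih.mul _

end F

/-- For every `A ⊆ ℕ`, the set `T A = {x₁, x₂, …} ∪ S A` is a term clone of `V`:
it contains all generators and is closed under substitution. -/
theorem stmt_8 (A : Set ℕ) :
    (∀ i : ℕ, F.x i ∈ Set.range F.x ∪ S A) ∧
    (∀ φ : F → F, (∀ a b : F, φ (F.mul a b) = F.mul (φ a) (φ b)) →
      φ F.zero = F.zero → φ F.p = F.p →
      (∀ i : ℕ, φ (F.x i) ∈ Set.range F.x ∪ S A) →
      ∀ t ∈ Set.range F.x ∪ S A, φ t ∈ Set.range F.x ∪ S A) := by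
  refine ⟨fun i => Or.inl ⟨i, rfl⟩, fun φ hφ h0 hp hgen t ht => ?_⟩
  rcases ht with ⟨i, rfl⟩ | rfl | ⟨Y, rfl, hA⟩
  · exact hgen i
  · exact Or.inr (Or.inl h0)
  · rcases F.isZeroOrWordOfCard_map_word hφ hp Y with hzero | ⟨Z, hZ, hcard⟩
    · exact Or.inr (Or.inl hzero)
    · exact Or.inr (Or.inr ⟨Z, hZ, hcard ▸ hA⟩)
end

section
/- The subalgebra of F generated by the single generator x₁ (the smallest subset of F containing 0, p, x₁ and closed under *) equals the 9-element set {0, p, x₁, (p,{p}), (p,{x₁}), (x₁,{p}), (x₁,{x₁}), (x₁,{x₁,p}), (p,{p,x₁})}, i.e., {0, p, x, p*p, p*x, x*p, x*x, x*x*p, p*p*x} where x = x₁ and products associate to the left; in particular x*x*p = x*p*x and p*p*x = p*x*p in F. -/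
/-!
A product in `F` only ever involves letters occurring in its factors, so every element of the
subalgebra generated by `x₁` is `0`, one of the letters `p`, `x₁`, or a word with head in
`{p, x₁}` and letter set a nonempty subset of `{p, x₁}`. These are the six words
`(a, {b})` and `(a, {p, x₁})`, and each of them is a product of at most three generators. Since a
word records its letters only as a set, `a * y * z = a * z * y` for all letters.
-/

namespace F

lemma mul_mul_letter_of_ne {y z : Letter} (h : y ≠ z) (a : Letter) :
    mul (mul (letter a) (letter y)) (letter z) = word a ⟨{y, z}, Finset.insert_nonempty _ _⟩ := by
  simp [mul, h.symm, Finset.pair_comm]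

lemma mul_mul_letter_comm (a y z : Letter) :
    mul (mul (letter a) (letter y)) (letter z) = mul (mul (letter a) (letter z)) (letter y) := by
  by_cases h : y = z
  · rw [h]
  · simp only [mul_mul_letter_of_ne h, mul_mul_letter_of_ne (Ne.symm h), Finset.pair_comm]

def Supported (S : Finset Letter) : F → Prop
  | zero => True
  | letter a => a ∈ S
  | word a Y => a ∈ S ∧ Y.1 ⊆ S

lemma Supported.mul {S : Finset Letter} {a b : F} (ha : a.Supported S) (hb : b.Supported S) :
    (a.mul b).Supported S := by
  cases a <;> cases b <;> simp only [F.mul] <;> try trivial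
  · exact ⟨ha, Finset.singleton_subset_iff.mpr hb⟩
  · split
    · trivial
    · exact ⟨ha.1, Finset.insert_subset hb ha.2⟩

lemma mem_of_supported_pair {u v : Letter} {a : F} (ha : a.Supported {u, v}) :
    a ∈ ({zero, letter u, letter v,
      word u ⟨{u}, Finset.singleton_nonempty u⟩, word u ⟨{v}, Finset.singleton_nonempty v⟩,
      word v ⟨{u}, Finset.singleton_nonempty u⟩, word v ⟨{v}, Finset.singleton_nonempty v⟩,
      word v ⟨{v, u}, Finset.insert_nonempty _ _⟩,
      word u ⟨{u, v}, Finset.insert_nonempty _ _⟩} : Set F) := by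
  rcases a with _ | c | ⟨c, Y, hY⟩
  · simp
  · rcases Finset.mem_insert.mp ha with rfl | hc <;> simp_all
  · obtain ⟨hc, hYuv⟩ := ha
    have hY' : Y = {u} ∨ Y = {v} ∨ Y = {u, v} := by
      rw [← Finset.coe_subset, Finset.coe_pair, Set.subset_pair_iff_eq] at hYuv
      simpa [hY.ne_empty] using hYuv
    simp only [Finset.mem_insert, Finset.mem_singleton] at hc
    rcases hc with rfl | rfl <;> rcases hY' with rfl | rfl | rfl <;> simp [Finset.pair_comm]

lemma _root_.Gen.supported {G : Set F} {S : Finset Letter} (hp : none ∈ S)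
    (hG : ∀ a ∈ G, a.Supported S) {a : F} (ha : Gen G a) : a.Supported S := by
  induction ha with
  | zero => trivial
  | p => exact hp
  | base h => exact hG _ h
  | mul _ _ iha ihb => exact iha.mul ihb

lemma setOf_gen_x (i : ℕ) :
    {a : F | Gen {x i} a} =
      {zero, p, x i,
        word none ⟨{none}, Finset.singleton_nonempty none⟩,
        word none ⟨{some i}, Finset.singleton_nonempty (some i)⟩,
        word (some i) ⟨{none}, Finset.singleton_nonempty none⟩,
        word (some i) ⟨{some i}, Finset.singleton_nonempty (some i)⟩,
        word (some i) ⟨{some i, none}, Finset.insert_nonempty _ _⟩,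
        word none ⟨{none, some i}, Finset.insert_nonempty _ _⟩} := by
  refine Set.Subset.antisymm
    (fun a ha => mem_of_supported_pair (Gen.supported (S := {none, some i}) ?_ ?_ ha)) ?_
  · simp
  · simp [x, Supported]
  · have hx : Gen {x i} (x i) := Gen.base rfl
    have hxxp := mul_mul_letter_of_ne (Option.some_ne_none i) (some i)
    have hppx := mul_mul_letter_of_ne (Option.some_ne_none i).symm none
    simp only [Set.insert_subset_iff, Set.singleton_subset_iff]
    exact ⟨.zero, .p, hx, .mul .p .p, .mul .p hx, .mul hx .p, .mul hx hx,
      hxxp ▸ .mul (.mul hx hx) .p, hppx ▸ .mul (.mul .p .p) hx⟩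

end F

/-- The subalgebra of `F` generated by `x₁` is the 9-element set
`{0, p, x, p*p, p*x, x*p, x*x, x*x*p, p*p*x}` (products associating to the left);
in particular `x*x*p = x*p*x` and `p*p*x = p*x*p`. -/
theorem stmt_11 :
    {a : F | Gen ({F.x 1} : Set F) a} =
      ({F.zero, F.p, F.x 1, F.mul F.p F.p, F.mul F.p (F.x 1), F.mul (F.x 1) F.p,
        F.mul (F.x 1) (F.x 1), F.mul (F.mul (F.x 1) (F.x 1)) F.p,
        F.mul (F.mul F.p F.p) (F.x 1)} : Set F) ∧
    ({F.zero, F.p, F.x 1, F.mul F.p F.p, F.mul F.p (F.x 1), F.mul (F.x 1) F.p,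
        F.mul (F.x 1) (F.x 1), F.mul (F.mul (F.x 1) (F.x 1)) F.p,
        F.mul (F.mul F.p F.p) (F.x 1)} : Set F) =
      ({F.zero, F.p, F.x 1,
        F.word none ⟨{none}, Finset.singleton_nonempty none⟩,
        F.word none ⟨{some 1}, Finset.singleton_nonempty (some 1)⟩,
        F.word (some 1) ⟨{none}, Finset.singleton_nonempty none⟩,
        F.word (some 1) ⟨{some 1}, Finset.singleton_nonempty (some 1)⟩,
        F.word (some 1) ⟨{some 1, none}, Finset.insert_nonempty _ _⟩,
        F.word none ⟨{none, some 1}, Finset.insert_nonempty _ _⟩} : Set F) ∧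
    {a : F | Gen ({F.x 1} : Set F) a}.ncard = 9 ∧
    F.mul (F.mul (F.x 1) (F.x 1)) F.p = F.mul (F.mul (F.x 1) F.p) (F.x 1) ∧
    F.mul (F.mul F.p F.p) (F.x 1) = F.mul (F.mul F.p (F.x 1)) F.p := by
  have hxxp := F.mul_mul_letter_of_ne (Option.some_ne_none 1) (some 1)
  have hppx := F.mul_mul_letter_of_ne (Option.some_ne_none 1).symm none
  refine ⟨?_, ?_, ?_, F.mul_mul_letter_comm _ _ _, F.mul_mul_letter_comm _ _ _⟩
  · rw [F.setOf_gen_x, F.x, F.p, hxxp, hppx]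
    rfl
  · rw [F.x, F.p, hxxp, hppx]
    rfl
  · rw [F.setOf_gen_x]
    simp [Set.ncard_insert_of_notMem, F.p, F.x, Subtype.ext_iff, Finset.ext_iff]
end
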